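/- Two ellipsoids El(M) = {z ∈ ℝ^{2n} : zᵀ M z ≤ 1} and El(M′), with M, M′ symmetric positive definite, are mapped to one another by some linear symplectomorphism (i.e., there exists A ∈ Sp(2n,ℝ) with A(El(M′)) = El(M)) if and only if M and M′ have the same symplectic eigenvalues. -/

import Mathlib

open Matrix MeasureTheory BigOperators

noncomputable def stdJ (n : ℕ) : Matrix (Fin n ⊕ Fin n) (Fin n ⊕ Fin n) ℝ :=
  Matrix.fromBlocks 0 1 (-1) 0

def IsSymplectic {n : ℕ} (S : Matrix (Fin n ⊕ Fin n) (Fin n ⊕ Fin n) ℝ) : Prop :=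
  Sᵀ * stdJ n * S = stdJ n

def IsWilliamsonEigs {n : ℕ} (M : Matrix (Fin n ⊕ Fin n) (Fin n ⊕ Fin n) ℝ)
    (lam : Fin n → ℝ) : Prop :=
  (∀ i, 0 < lam i) ∧ ∃ S : Matrix (Fin n ⊕ Fin n) (Fin n ⊕ Fin n) ℝ, IsSymplectic S ∧
    Sᵀ * M * S = Matrix.fromBlocks (Matrix.diagonal lam) 0 0 (Matrix.diagonal lam)

/-!
A linear map `A` carries `El(M')` onto `El(M)` exactly when `Aᵀ M A = M'`, because an ellipsoid
determines its quadratic form by homogeneity. With Williamson normal forms `Sᵀ M S = D(λ)` and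
`S'ᵀ M' S' = D(λ')`, this reads `Tᵀ D(λ) T = D(λ')` for the symplectic matrix `T = S⁻¹ A S'`.
As `J Tᵀ = T⁻¹ J`, the matrix `J D(λ')` is then similar to `J D(λ)`; their squares are diagonal
with entries `-λᵢ²`, each twice, so the characteristic polynomials give equal multisets of `λᵢ²`,
and sorting pins down `λ = λ'`. Conversely, for `λ = λ'` the matrix `A = S S'⁻¹` works.
-/

lemma transpose_mul_mul_conj_eq_iff {ι R : Type*} [Fintype ι] [DecidableEq ι] [CommRing R]
    {S S' A M M' : Matrix ι ι R} (hS : IsUnit S.det) (hS' : IsUnit S'.det) :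
    (S⁻¹ * A * S')ᵀ * (Sᵀ * M * S) * (S⁻¹ * A * S') = S'ᵀ * M' * S' ↔ Aᵀ * M * A = M' := by
  have hSt : IsUnit Sᵀ.det := by rwa [det_transpose]
  have hS'u : IsUnit S' := (isUnit_iff_isUnit_det _).2 hS'
  have hS'tu : IsUnit S'ᵀ := (isUnit_iff_isUnit_det _).2 (by rwa [det_transpose])
  have hconj : (S⁻¹ * A * S')ᵀ * (Sᵀ * M * S) * (S⁻¹ * A * S') = S'ᵀ * (Aᵀ * M * A) * S' := by
    simp only [transpose_mul, transpose_nonsing_inv, Matrix.mul_assoc,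
      nonsing_inv_mul_cancel_left _ _ hSt, mul_nonsing_inv_cancel_left _ _ hS]
  rw [hconj, hS'u.mul_left_inj, hS'tu.mul_right_inj]

section Ellipsoid

variable {m : Type*} [Fintype m]

def ellipsoid (N : Matrix m m ℝ) : Set (m → ℝ) := {z | z ⬝ᵥ N *ᵥ z ≤ 1}

lemma dotProduct_mulVec_conj (A N : Matrix m m ℝ) (z : m → ℝ) :
    A *ᵥ z ⬝ᵥ N *ᵥ (A *ᵥ z) = z ⬝ᵥ (Aᵀ * N * A) *ᵥ z := by
  rw [Matrix.mul_assoc, ← mulVec_mulVec, ← mulVec_mulVec, dotProduct_mulVec z, vecMul_transpose]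

lemma preimage_ellipsoid (A N : Matrix m m ℝ) :
    A.mulVec ⁻¹' ellipsoid N = ellipsoid (Aᵀ * N * A) := by
  ext z
  simp only [ellipsoid, Set.mem_preimage, Set.mem_ofPred_eq, dotProduct_mulVec_conj]

lemma dotProduct_mulVec_smul_self (N : Matrix m m ℝ) (a : ℝ) (z : m → ℝ) :
    a • z ⬝ᵥ N *ᵥ (a • z) = a ^ 2 * (z ⬝ᵥ N *ᵥ z) := by
  rw [mulVec_smul, dotProduct_smul, smul_dotProduct, smul_eq_mul, smul_eq_mul]
  ring

lemma dotProduct_mulVec_le_of_ellipsoid_subset {N N' : Matrix m m ℝ} (hN : N.PosDef)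
    (h : ellipsoid N ⊆ ellipsoid N') (z : m → ℝ) : z ⬝ᵥ N' *ᵥ z ≤ z ⬝ᵥ N *ᵥ z := by
  rcases eq_or_ne z 0 with rfl | hz
  · simp
  have hc : 0 < z ⬝ᵥ N *ᵥ z := by simpa using hN.dotProduct_mulVec_pos hz
  have hsq : (√(z ⬝ᵥ N *ᵥ z))⁻¹ ^ 2 = (z ⬝ᵥ N *ᵥ z)⁻¹ := by rw [inv_pow, Real.sq_sqrt hc.le]
  have hmem : (√(z ⬝ᵥ N *ᵥ z))⁻¹ • z ∈ ellipsoid N' := h <| by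
    simp only [ellipsoid, Set.mem_ofPred_eq, dotProduct_mulVec_smul_self, hsq,
      inv_mul_cancel₀ hc.ne', le_refl]
  simp only [ellipsoid, Set.mem_ofPred_eq, dotProduct_mulVec_smul_self, hsq] at hmem
  rwa [inv_mul_le_iff₀ hc, mul_one] at hmem

lemma eq_of_forall_dotProduct_mulVec_self_eq {N N' : Matrix m m ℝ} (hN : N.IsSymm)
    (hN' : N'.IsSymm) (h : ∀ z, z ⬝ᵥ N *ᵥ z = z ⬝ᵥ N' *ᵥ z) : N = N' := by
  classical
  have polarization : ∀ (B : Matrix m m ℝ), B.IsSymm → ∀ x y : m → ℝ,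
      2 * (x ⬝ᵥ B *ᵥ y) = (x + y) ⬝ᵥ B *ᵥ (x + y) - x ⬝ᵥ B *ᵥ x - y ⬝ᵥ B *ᵥ y := by
    intro B hB x y
    have hyx : y ⬝ᵥ B *ᵥ x = x ⬝ᵥ B *ᵥ y := by
      rw [dotProduct_mulVec y, ← mulVec_transpose, hB.eq, dotProduct_comm]
    rw [mulVec_add, add_dotProduct, dotProduct_add, dotProduct_add, hyx]
    ring
  ext i j
  have hij := polarization N hN (Pi.single i 1) (Pi.single j 1)
  rw [h, h, h, ← polarization N' hN'] at hij
  simpa [mulVec_single, single_dotProduct] using hij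

lemma ellipsoid_inj {N N' : Matrix m m ℝ} (hN : N.PosDef) (hN' : N'.PosDef) :
    ellipsoid N = ellipsoid N' ↔ N = N' := by
  refine ⟨fun h => ?_, congrArg ellipsoid⟩
  refine eq_of_forall_dotProduct_mulVec_self_eq (isHermitian_iff_isSymm.1 hN.isHermitian)
    (isHermitian_iff_isSymm.1 hN'.isHermitian)
    fun z => le_antisymm ?_ ?_
  · exact dotProduct_mulVec_le_of_ellipsoid_subset hN' h.ge z
  · exact dotProduct_mulVec_le_of_ellipsoid_subset hN h.le z

variable [DecidableEq m]

lemma image_ellipsoid_eq_iff {A M M' : Matrix m m ℝ} (hM : M.PosDef) (hM' : M'.PosDef)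
    (hA : IsUnit A.det) : A.mulVec '' ellipsoid M' = ellipsoid M ↔ Aᵀ * M * A = M' := by
  have hAu : IsUnit A := (isUnit_iff_isUnit_det A).2 hA
  have hAM : (Aᵀ * M * A).PosDef := by
    simpa only [conjTranspose_eq_transpose_of_trivial] using
      hM.conjTranspose_mul_mul_same (mulVec_injective_iff_isUnit.2 hAu)
  rw [← ellipsoid_inj hAM hM', ← preimage_ellipsoid, Set.preimage_eq_iff_eq_image
    ⟨mulVec_injective_iff_isUnit.2 hAu, mulVec_surjective_iff_isUnit.2 hAu⟩, eq_comm]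

end Ellipsoid

section Williamson

open Polynomial

variable {n : ℕ}

lemma stdJ_eq_neg_J : stdJ n = -J (Fin n) ℝ := by
  simp [stdJ, J, fromBlocks_neg]

lemma isSymplectic_iff_mem_symplecticGroup {S : Matrix (Fin n ⊕ Fin n) (Fin n ⊕ Fin n) ℝ} :
    IsSymplectic S ↔ S ∈ symplecticGroup (Fin n) ℝ := by
  rw [SymplecticGroup.mem_iff', IsSymplectic, stdJ_eq_neg_J, Matrix.mul_neg, Matrix.neg_mul,
    neg_inj]

namespace IsSymplectic

variable {S T : Matrix (Fin n ⊕ Fin n) (Fin n ⊕ Fin n) ℝ}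

lemma isUnit_det (hS : IsSymplectic S) : IsUnit S.det :=
  SymplecticGroup.symplectic_det (isSymplectic_iff_mem_symplecticGroup.1 hS)

lemma mul (hS : IsSymplectic S) (hT : IsSymplectic T) : IsSymplectic (S * T) := by
  rw [isSymplectic_iff_mem_symplecticGroup] at *
  exact mul_mem hS hT

lemma inv (hS : IsSymplectic S) : IsSymplectic S⁻¹ := by
  rw [isSymplectic_iff_mem_symplecticGroup] at *
  simpa only [SymplecticGroup.coe_inv'] using
    (⟨S, hS⟩⁻¹ : symplecticGroup (Fin n) ℝ).2

lemma stdJ_mul_transpose (hS : IsSymplectic S) : stdJ n * Sᵀ = S⁻¹ * stdJ n := by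
  have hS' := isSymplectic_iff_mem_symplecticGroup.1 hS
  rw [← SymplecticGroup.coe_inv' ⟨S, hS'⟩, SymplecticGroup.coe_inv, stdJ_eq_neg_J]
  simp only [Matrix.neg_mul, Matrix.mul_neg, neg_neg, Matrix.mul_assoc, J_squared]
  simp

end IsSymplectic

noncomputable def williamsonDiag (lam : Fin n → ℝ) : Matrix (Fin n ⊕ Fin n) (Fin n ⊕ Fin n) ℝ :=
  fromBlocks (diagonal lam) 0 0 (diagonal lam)

lemma sq_stdJ_mul_williamsonDiag (lam : Fin n → ℝ) :
    (stdJ n * williamsonDiag lam) ^ 2 =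
      fromBlocks (diagonal fun i => -lam i ^ 2) 0 0 (diagonal fun i => -lam i ^ 2) := by
  simp only [sq, stdJ, williamsonDiag, fromBlocks_multiply]
  simp [diagonal_mul_diagonal]

lemma charpoly_sq_stdJ_mul_transpose_mul_mul {T : Matrix (Fin n ⊕ Fin n) (Fin n ⊕ Fin n) ℝ}
    (hT : IsSymplectic T) (D : Matrix (Fin n ⊕ Fin n) (Fin n ⊕ Fin n) ℝ) :
    ((stdJ n * (Tᵀ * D * T)) ^ 2).charpoly = ((stdJ n * D) ^ 2).charpoly := by
  obtain ⟨U, rfl⟩ := (isUnit_iff_isUnit_det _).2 hT.isUnit_det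
  have hsimilar : stdJ n * ((U : Matrix _ _ ℝ)ᵀ * D * (U : Matrix _ _ ℝ)) =
      (↑U⁻¹ : Matrix _ _ ℝ) * (stdJ n * D) * (U : Matrix _ _ ℝ) := by
    simp only [coe_units_inv, ← Matrix.mul_assoc, hT.stdJ_mul_transpose]
  rw [hsimilar, Units.conj_pow', coe_units_inv, charpoly_units_conj']

lemma roots_charpoly_diagonal {ι R : Type*} [Fintype ι] [DecidableEq ι] [CommRing R] [IsDomain R]
    (d : ι → R) : (diagonal d).charpoly.roots = Finset.univ.val.map d := by
  rw [charpoly_diagonal, Polynomial.roots_prod _ _ (Finset.prod_ne_zero_iff.2 fun i _ =>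
    X_sub_C_ne_zero (d i))]
  simp

lemma roots_charpoly_sq_stdJ_mul_williamsonDiag (lam : Fin n → ℝ) :
    ((stdJ n * williamsonDiag lam) ^ 2).charpoly.roots =
      2 • Finset.univ.val.map fun i => -lam i ^ 2 := by
  rw [sq_stdJ_mul_williamsonDiag, charpoly_fromBlocks_zero₁₂, ← sq, roots_pow,
    roots_charpoly_diagonal]

lemma Monotone.eq_of_map_univ_val_eq {α : Type*} [LinearOrder α] {f g : Fin n → α}
    (hf : Monotone f) (hg : Monotone g)
    (h : Finset.univ.val.map f = Finset.univ.val.map g) : f = g := by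
  rw [Fin.univ_val_map, Fin.univ_val_map, Multiset.coe_eq_coe] at h
  exact List.ofFn_injective (h.eq_of_sortedLE hf.sortedLE_ofFn hg.sortedLE_ofFn)

lemma monotone_neg_sq {ι : Type*} [Preorder ι] {lam : ι → ℝ} (hpos : ∀ i, 0 < lam i)
    (hanti : Antitone lam) : Monotone fun i => -lam i ^ 2 :=
  fun _ j hij => neg_le_neg (pow_le_pow_left₀ (hpos j).le (hanti hij) 2)

theorem eq_of_transpose_mul_williamsonDiag_mul_eq {T : Matrix (Fin n ⊕ Fin n) (Fin n ⊕ Fin n) ℝ}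
    (hT : IsSymplectic T) {lam lam' : Fin n → ℝ} (hpos : ∀ i, 0 < lam i) (hpos' : ∀ i, 0 < lam' i)
    (hanti : Antitone lam) (hanti' : Antitone lam')
    (h : Tᵀ * williamsonDiag lam * T = williamsonDiag lam') : lam = lam' := by
  have hroots := congrArg roots (charpoly_sq_stdJ_mul_transpose_mul_mul hT (williamsonDiag lam))
  rw [h, roots_charpoly_sq_stdJ_mul_williamsonDiag, roots_charpoly_sq_stdJ_mul_williamsonDiag]
    at hroots
  have hsq := (monotone_neg_sq hpos' hanti').eq_of_map_univ_val_eq (monotone_neg_sq hpos hanti)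
    (nsmul_right_injective two_ne_zero hroots)
  funext i
  exact (pow_left_inj₀ (hpos i).le (hpos' i).le two_ne_zero).1 (neg_inj.1 (congrFun hsq i)).symm

end Williamson

theorem ellipsoid_symplectomorphic_iff {n : ℕ}
    (M M' : Matrix (Fin n ⊕ Fin n) (Fin n ⊕ Fin n) ℝ) (hM : M.PosDef) (hM' : M'.PosDef)
    (lam lam' : Fin n → ℝ)
    (hW : IsWilliamsonEigs M lam) (hW' : IsWilliamsonEigs M' lam')
    (hdec : ∀ i j : Fin n, i ≤ j → lam j ≤ lam i)
    (hdec' : ∀ i j : Fin n, i ≤ j → lam' j ≤ lam' i) :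
    (∃ A : Matrix (Fin n ⊕ Fin n) (Fin n ⊕ Fin n) ℝ, IsSymplectic A ∧
        (fun z => A.mulVec z) '' {z : (Fin n ⊕ Fin n) → ℝ | z ⬝ᵥ M'.mulVec z ≤ 1}
          = {z : (Fin n ⊕ Fin n) → ℝ | z ⬝ᵥ M.mulVec z ≤ 1}) ↔
      lam = lam' := by
  obtain ⟨hlam, S, hS, hSM⟩ := hW
  obtain ⟨hlam', S', hS', hSM'⟩ := hW'
  have hnormal : ∀ A, IsSymplectic A → (A.mulVec '' ellipsoid M' = ellipsoid M ↔
      (S⁻¹ * A * S')ᵀ * williamsonDiag lam * (S⁻¹ * A * S') = williamsonDiag lam') :=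
    fun A hA => by
      rw [williamsonDiag, williamsonDiag, ← hSM, ← hSM',
        transpose_mul_mul_conj_eq_iff hS.isUnit_det hS'.isUnit_det]
      exact image_ellipsoid_eq_iff hM hM' hA.isUnit_det
  constructor
  · rintro ⟨A, hA, himg⟩
    exact eq_of_transpose_mul_williamsonDiag_mul_eq ((hS.inv.mul hA).mul hS') hlam hlam' hdec hdec'
      ((hnormal A hA).1 himg)
  · rintro rfl
    refine ⟨S * S'⁻¹, hS.mul hS'.inv, (hnormal _ (hS.mul hS'.inv)).2 ?_⟩
    rw [nonsing_inv_mul_cancel_left _ _ hS.isUnit_det, nonsing_inv_mul _ hS'.isUnit_det,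
      transpose_one, Matrix.one_mul, Matrix.mul_one]
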